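/- arXiv:2503.11072 — 2 statements merged into one kernel-verified Lean document; each statement's English description precedes it below -/
import Mathlib

section
/- Let $\Theta : \mathbb{R}^n \to \mathbb{R} \cup \{+\infty\}$ be a closed (lower semicontinuous) proper convex function with a unique minimizer, and let $\Theta_{opt}$ be its minimum value. Define $\Phi_\Theta(s) := \mathrm{diam}(\{x : \Theta(x) < s\})$ (with $\mathrm{diam}(\emptyset) = 0$). Then $\Phi_\Theta$ is upper semicontinuous on $[\Theta_{opt}, \infty)$. -/
open Filter Topology Bornology

/-- Sublevel sets of a closed convex function with a unique minimizer are bounded. -/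
lemma sublevel_bounded (n : ℕ) (D : Set (EuclideanSpace ℝ (Fin n)))
    (Θ : EuclideanSpace ℝ (Fin n) → ℝ)
    (hconv : ConvexOn ℝ D Θ)
    (hclosed : IsClosed {p : EuclideanSpace ℝ (Fin n) × ℝ | p.1 ∈ D ∧ Θ p.1 ≤ p.2})
    (xopt : EuclideanSpace ℝ (Fin n)) (Θopt : ℝ)
    (hmin : xopt ∈ D ∧ Θ xopt = Θopt ∧ ∀ y ∈ D, Θopt ≤ Θ y)
    (huniq : ∀ x ∈ D, (∀ y ∈ D, Θ x ≤ Θ y) → x = xopt) (t : ℝ) :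
    IsBounded {x | x ∈ D ∧ Θ x ≤ t} := by
  by_contra hb
  rw [Metric.isBounded_iff_subset_closedBall xopt] at hb
  push_neg at hb
  have hseq : ∀ k : ℕ, ∃ x, (x ∈ D ∧ Θ x ≤ t) ∧ (k : ℝ) + 1 < ‖x - xopt‖ := by
    intro k
    have h2 := hb ((k : ℝ) + 1)
    rw [Set.not_subset] at h2
    obtain ⟨x, hx1, hx2⟩ := h2
    refine ⟨x, hx1, ?_⟩
    simpa [Metric.mem_closedBall, dist_eq_norm, not_le] using hx2
  choose u hu hnorm using hseq
  have hpos : ∀ k, (0 : ℝ) < ‖u k - xopt‖ := fun k =>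
    lt_of_le_of_lt (by positivity) (hnorm k)
  set d : ℕ → EuclideanSpace ℝ (Fin n) := fun k => ‖u k - xopt‖⁻¹ • (u k - xopt) with hd
  have hdmem : ∀ k, d k ∈ Metric.sphere (0 : EuclideanSpace ℝ (Fin n)) 1 := by
    intro k
    rw [mem_sphere_zero_iff_norm, hd, norm_smul, norm_inv, norm_norm,
      inv_mul_cancel₀ (hpos k).ne']
  obtain ⟨d₀, hd₀, φ, hφ, hlim⟩ := (isCompact_sphere (0 : EuclideanSpace ℝ (Fin n)) 1).tendsto_subseq hdmem
  set lam : ℕ → ℝ := fun k => ‖u (φ k) - xopt‖⁻¹ with hlam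
  have hlampos : ∀ k, 0 < lam k := fun k => inv_pos.2 (hpos (φ k))
  have hlamle : ∀ k, lam k ≤ ((k : ℝ) + 1)⁻¹ := by
    intro k
    apply inv_anti₀ (by positivity)
    calc (k : ℝ) + 1 ≤ (φ k : ℝ) + 1 := by
          have h := hφ.id_le k
          have : (k : ℝ) ≤ (φ k : ℝ) := Nat.cast_le.2 h
          linarith
      _ ≤ ‖u (φ k) - xopt‖ := (hnorm (φ k)).le
  have hlamle1 : ∀ k, lam k ≤ 1 := fun k => (hlamle k).trans (by
    rw [inv_le_one_iff₀]; right; linarith [Nat.cast_nonneg (α := ℝ) k])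
  have hlam0 : Tendsto lam atTop (𝓝 0) := by
    refine squeeze_zero (fun k => (hlampos k).le) hlamle ?_
    simpa [one_div] using tendsto_one_div_add_atTop_nhds_zero_nat (𝕜 := ℝ)
  -- z k is a convex combination of xopt and u (φ k)
  set z : ℕ → EuclideanSpace ℝ (Fin n) := fun k => xopt + d (φ k) with hz
  have hzcomb : ∀ k, z k = (1 - lam k) • xopt + lam k • u (φ k) := by
    intro k
    simp only [hz, hd, hlam]
    module
  have hzepi : ∀ k, z k ∈ D ∧ Θ (z k) ≤ (1 - lam k) * Θopt + lam k * t := by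
    intro k
    rw [hzcomb k]
    constructor
    · exact hconv.1 hmin.1 (hu (φ k)).1 (by linarith [hlamle1 k]) (hlampos k).le (by ring)
    · calc Θ ((1 - lam k) • xopt + lam k • u (φ k))
          ≤ (1 - lam k) * Θ xopt + lam k * Θ (u (φ k)) :=
            hconv.2 hmin.1 (hu (φ k)).1 (by linarith [hlamle1 k]) (hlampos k).le (by ring)
        _ ≤ (1 - lam k) * Θopt + lam k * t := by
            rw [hmin.2.1]
            have := (hu (φ k)).2
            nlinarith [(hlampos k).le]
  have hztend : Tendsto z atTop (𝓝 (xopt + d₀)) :=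
    tendsto_const_nhds.add hlim
  have hbtend : Tendsto (fun k => (1 - lam k) * Θopt + lam k * t) atTop (𝓝 Θopt) := by
    have : Tendsto (fun k => (1 - lam k) * Θopt + lam k * t) atTop (𝓝 ((1 - 0) * Θopt + 0 * t)) :=
      ((tendsto_const_nhds.sub hlam0).mul tendsto_const_nhds).add (hlam0.mul tendsto_const_nhds)
    simpa using this
  have hmem : (xopt + d₀, Θopt) ∈ {p : EuclideanSpace ℝ (Fin n) × ℝ | p.1 ∈ D ∧ Θ p.1 ≤ p.2} := by
    refine hclosed.mem_of_tendsto (hztend.prodMk_nhds hbtend) (Eventually.of_forall fun k => ?_)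
    exact hzepi k
  have heq : xopt + d₀ = xopt := by
    refine huniq _ hmem.1 fun y hy => le_trans hmem.2 (hmin.2.2 y hy)
  have : d₀ = 0 := by
    have := heq; rwa [add_eq_left] at this
  rw [mem_sphere_zero_iff_norm] at hd₀
  rw [this] at hd₀
  simp at hd₀


theorem stmt_4' (n : ℕ) (D : Set (EuclideanSpace ℝ (Fin n)))
    (Θ : EuclideanSpace ℝ (Fin n) → ℝ)
    (hproper : D.Nonempty)
    (hconv : ConvexOn ℝ D Θ)
    (hclosed : IsClosed {p : EuclideanSpace ℝ (Fin n) × ℝ | p.1 ∈ D ∧ Θ p.1 ≤ p.2})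
    (xopt : EuclideanSpace ℝ (Fin n)) (Θopt : ℝ)
    (hmin : xopt ∈ D ∧ Θ xopt = Θopt ∧ ∀ y ∈ D, Θopt ≤ Θ y)
    (huniq : ∀ x ∈ D, (∀ y ∈ D, Θ x ≤ Θ y) → x = xopt)
    (hbdd : ∀ t : ℝ, IsBounded {x | x ∈ D ∧ Θ x ≤ t}) :
    UpperSemicontinuousOn
      (fun s : ℝ => EMetric.diam {x | x ∈ D ∧ Θ x < s}) (Set.Ici Θopt) := by
  set K : ℝ → Set (EuclideanSpace ℝ (Fin n)) := fun t => {x | x ∈ D ∧ Θ x ≤ t} with hK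
  have hKclosed : ∀ t, IsClosed (K t) := by
    intro t
    have : K t = (fun x => (x, t)) ⁻¹' {p : EuclideanSpace ℝ (Fin n) × ℝ | p.1 ∈ D ∧ Θ p.1 ≤ p.2} := rfl
    rw [this]
    exact hclosed.preimage (continuous_id.prodMk continuous_const)
  have hKmono : ∀ {a b : ℝ}, a ≤ b → K a ⊆ K b := fun hab x hx => ⟨hx.1, hx.2.trans hab⟩
  intro s hs c hc
  simp only [Set.mem_Ici] at hs
  -- Step 1: diam (K s) ≤ diam of the strict sublevel set at s
  have hKs_le : EMetric.diam (K s) ≤ EMetric.diam {x | x ∈ D ∧ Θ x < s} := by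
    rcases eq_or_lt_of_le hs with heq | hlt
    · -- s = Θopt : K s ⊆ {xopt}
      have hsub : K s ⊆ {xopt} := by
        intro x hx
        have hxmin : ∀ y ∈ D, Θ x ≤ Θ y := fun y hy =>
          le_trans (hx.2.trans (le_of_eq heq.symm)) (hmin.2.2 y hy)
        exact huniq x hx.1 hxmin
      calc EMetric.diam (K s) ≤ EMetric.diam ({xopt} : Set (EuclideanSpace ℝ (Fin n))) :=
            EMetric.diam_mono hsub
        _ = 0 := EMetric.diam_singleton
        _ ≤ _ := zero_le
    · -- Θopt < s : K s ⊆ closure of strict sublevel set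
      have hsub : K s ⊆ closure {x | x ∈ D ∧ Θ x < s} := by
        intro x hx
        set z : ℕ → EuclideanSpace ℝ (Fin n) :=
          fun k => ((k : ℝ) + 1)⁻¹ • xopt + (1 - ((k : ℝ) + 1)⁻¹) • x with hz
        have heps : ∀ k : ℕ, 0 < ((k : ℝ) + 1)⁻¹ ∧ ((k : ℝ) + 1)⁻¹ ≤ 1 := by
          intro k
          constructor
          · positivity
          · rw [inv_le_one_iff₀]; right; linarith [Nat.cast_nonneg (α := ℝ) k]
        have hzmem : ∀ k, z k ∈ {x | x ∈ D ∧ Θ x < s} := by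
          intro k
          obtain ⟨h1, h2⟩ := heps k
          constructor
          · exact hconv.1 hmin.1 hx.1 h1.le (by linarith) (by ring)
          · calc Θ (z k) ≤ ((k : ℝ) + 1)⁻¹ * Θ xopt + (1 - ((k : ℝ) + 1)⁻¹) * Θ x :=
                  hconv.2 hmin.1 hx.1 h1.le (by linarith) (by ring)
              _ ≤ ((k : ℝ) + 1)⁻¹ * Θopt + (1 - ((k : ℝ) + 1)⁻¹) * s := by
                  rw [hmin.2.1]
                  have := hx.2
                  nlinarith
              _ < s := by nlinarith
        have hztend : Tendsto z atTop (𝓝 x) := by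
          have h0 : Tendsto (fun k : ℕ => ((k : ℝ) + 1)⁻¹) atTop (𝓝 0) := by
            simpa [one_div] using tendsto_one_div_add_atTop_nhds_zero_nat (𝕜 := ℝ)
          have : Tendsto z atTop (𝓝 ((0 : ℝ) • xopt + (1 - (0:ℝ)) • x)) := by
            exact (h0.smul tendsto_const_nhds).add
              ((tendsto_const_nhds.sub h0).smul tendsto_const_nhds)
          simpa using this
        exact mem_closure_of_tendsto hztend (Eventually.of_forall hzmem)
      calc EMetric.diam (K s) ≤ EMetric.diam (closure {x | x ∈ D ∧ Θ x < s}) :=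
            EMetric.diam_mono hsub
        _ = EMetric.diam {x | x ∈ D ∧ Θ x < s} := EMetric.diam_closure _
  have hdiamKs : EMetric.diam (K s) < c := lt_of_le_of_lt hKs_le hc
  -- Step 2: find t > s with diam (K t) < c
  obtain ⟨t, hst, hKt⟩ : ∃ t, s < t ∧ EMetric.diam (K t) < c := by
    by_contra h
    push_neg at h
    obtain ⟨c', hc'1, hc'2⟩ := exists_between hdiamKs
    have hex : ∀ k : ℕ, ∃ p : EuclideanSpace ℝ (Fin n) × EuclideanSpace ℝ (Fin n),
        p.1 ∈ K (s + ((k : ℝ) + 1)⁻¹) ∧ p.2 ∈ K (s + ((k : ℝ) + 1)⁻¹) ∧ c' < edist p.1 p.2 := by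
      intro k
      have hts : s < s + ((k : ℝ) + 1)⁻¹ := by
        have : (0:ℝ) < ((k : ℝ) + 1)⁻¹ := by positivity
        linarith
      have hdge := h _ hts
      have : ¬ EMetric.diam (K (s + ((k : ℝ) + 1)⁻¹)) ≤ c' :=
        fun hle => absurd (hc'2.trans_le (hdge.trans hle)) (lt_irrefl _)
      rw [EMetric.diam, EMetric.diam_le_iff] at this
      push_neg at this
      obtain ⟨x, hx, y, hy, hxy⟩ := this
      exact ⟨(x, y), hx, hy, hxy⟩
    choose p hp1 hp2 hp3 using hex
    have hkle : ∀ k : ℕ, ((k : ℝ) + 1)⁻¹ ≤ 1 := by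
      intro k; rw [inv_le_one_iff₀]; right; linarith [Nat.cast_nonneg (α := ℝ) k]
    have hKcomp : IsCompact (K (s + 1)) :=
      Metric.isCompact_of_isClosed_isBounded (hKclosed _) (hbdd _)
    have hpmem : ∀ k, p k ∈ (K (s + 1)) ×ˢ (K (s + 1)) := by
      intro k
      exact ⟨hKmono (by linarith [hkle k]) (hp1 k), hKmono (by linarith [hkle k]) (hp2 k)⟩
    obtain ⟨q, hq, φ, hφ, hlim⟩ := (hKcomp.prod hKcomp).tendsto_subseq hpmem
    have hlim1 : Tendsto (fun k => (p (φ k)).1) atTop (𝓝 q.1) :=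
      (continuous_fst.tendsto q).comp hlim
    have hlim2 : Tendsto (fun k => (p (φ k)).2) atTop (𝓝 q.2) :=
      (continuous_snd.tendsto q).comp hlim
    -- q.1 and q.2 are in K s
    have hmemKs : ∀ (w : EuclideanSpace ℝ (Fin n)),
        (∀ m : ℕ, w ∈ K (s + ((m : ℝ) + 1)⁻¹)) → w ∈ K s := by
      intro w hw
      refine ⟨(hw 0).1, ?_⟩
      have htend : Tendsto (fun m : ℕ => s + ((m : ℝ) + 1)⁻¹) atTop (𝓝 (s + 0)) := by
        refine tendsto_const_nhds.add ?_
        simpa [one_div] using tendsto_one_div_add_atTop_nhds_zero_nat (𝕜 := ℝ)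
      rw [add_zero] at htend
      exact ge_of_tendsto' htend fun m => (hw m).2
    have hinK : ∀ (w : EuclideanSpace ℝ (Fin n)) (u : ℕ → EuclideanSpace ℝ (Fin n)),
        (∀ k, u k ∈ K (s + ((φ k : ℝ) + 1)⁻¹)) → Tendsto u atTop (𝓝 w) → w ∈ K s := by
      intro w u hu hut
      refine hmemKs w fun m => ?_
      refine (hKclosed _).mem_of_tendsto hut ?_
      filter_upwards [eventually_ge_atTop m] with k hk
      refine hKmono ?_ (hu k)
      have h1 : (m : ℝ) ≤ (φ k : ℝ) := by
        exact_mod_cast hk.trans (hφ.id_le k)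
      have : ((φ k : ℝ) + 1)⁻¹ ≤ ((m : ℝ) + 1)⁻¹ := by
        apply inv_anti₀ (by positivity); linarith
      linarith
    have hq1 : q.1 ∈ K s := hinK q.1 _ (fun k => hp1 (φ k)) hlim1
    have hq2 : q.2 ∈ K s := hinK q.2 _ (fun k => hp2 (φ k)) hlim2
    have hedist : c' ≤ edist q.1 q.2 := by
      have htend : Tendsto (fun k => edist (p (φ k)).1 (p (φ k)).2) atTop (𝓝 (edist q.1 q.2)) :=
        hlim1.edist hlim2
      exact ge_of_tendsto' htend fun k => (hp3 (φ k)).le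
    have : edist q.1 q.2 ≤ EMetric.diam (K s) := EMetric.edist_le_diam_of_mem hq1 hq2
    exact absurd (hedist.trans this) (not_le.2 hc'1)
  -- Step 3: conclude by monotonicity
  have hnhds : Set.Iio t ∈ 𝓝[Set.Ici Θopt] s :=
    nhdsWithin_le_nhds (Iio_mem_nhds hst)
  filter_upwards [hnhds] with t' ht'
  calc EMetric.diam {x | x ∈ D ∧ Θ x < t'}
      ≤ EMetric.diam (K t) := EMetric.diam_mono fun x hx => ⟨hx.1, (hx.2.trans ht').le⟩
    _ < c := hKt

/-- Theorem 5 of the paper. A closed proper convex function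
`Θ : ℝⁿ → ℝ ∪ {+∞}` is modelled by a real-valued function on its (nonempty)
effective domain `D`, with closed epigraph. If `Θ` has a unique minimizer with
minimum value `Θopt`, then the diameter `Φ(s)` of the strict sublevel set
`{x ∈ D | Θ x < s}` is upper semicontinuous on `[Θopt, ∞)`. -/
theorem stmt_4 (n : ℕ) (D : Set (EuclideanSpace ℝ (Fin n)))
    (Θ : EuclideanSpace ℝ (Fin n) → ℝ)
    (hproper : D.Nonempty)
    (hconv : ConvexOn ℝ D Θ)
    (hclosed : IsClosed {p : EuclideanSpace ℝ (Fin n) × ℝ | p.1 ∈ D ∧ Θ p.1 ≤ p.2})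
    (xopt : EuclideanSpace ℝ (Fin n)) (Θopt : ℝ)
    (hmin : xopt ∈ D ∧ Θ xopt = Θopt ∧ ∀ y ∈ D, Θopt ≤ Θ y)
    (huniq : ∀ x ∈ D, (∀ y ∈ D, Θ x ≤ Θ y) → x = xopt) :
    UpperSemicontinuousOn
      (fun s : ℝ => EMetric.diam {x | x ∈ D ∧ Θ x < s}) (Set.Ici Θopt) := by
  exact stmt_4' n D Θ hproper hconv hclosed xopt Θopt hmin huniq
    (sublevel_bounded n D Θ hconv hclosed xopt Θopt hmin huniq)
end

section
/- Let $\Theta : \mathbb{R}^n \to \mathbb{R} \cup \{+\infty\}$ be a closed proper convex function whose set of minimizers $X^*$ is nonempty, convex, closed, and bounded, with minimum value $\Theta_{opt}$. Then $\lim_{s \to \Theta_{opt}^+} \max_{x \in \mathrm{cl}(\mathrm{Lev}(\Theta, s))} \|x - \mathrm{Proj}_{X^*}(x)\| = 0$, where $\mathrm{Proj}_{X^*}(x)$ is the Euclidean projection of $x$ onto $X^*$. -/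
/-!
Since `Θ` is convex with a bounded set of minimizers, all its sublevel sets are bounded: on a
sphere around a minimizer that encloses `X*`, `Θ` stays above its minimum by a fixed margin `δ`
(compactness of the sphere and closedness of the epigraph), and convexity along rays from the
minimizer propagates this margin linearly outwards. Hence the sublevel sets
`{Θ ≤ s}`, `s ↓ Θopt`, form a decreasing family of compact sets with intersection `X*`, so they
eventually lie in any neighbourhood `{x | infEDist x X* < ε}` of `X*`.
-/

open Filter Topology Bornology Metric Set

theorem isClosed_sublevel_of_isClosed_epigraph {X : Type*} [TopologicalSpace X] {D : Set X}
    {f : X → ℝ} (h : IsClosed {p : X × ℝ | p.1 ∈ D ∧ f p.1 ≤ p.2}) (c : ℝ) :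
    IsClosed {x | x ∈ D ∧ f x ≤ c} :=
  h.preimage (continuous_id.prodMk continuous_const)

theorem eventually_sublevel_subset_of_isOpen {X : Type*} [TopologicalSpace X] {D : Set X}
    {f : X → ℝ} {m c : ℝ} (hmc : m < c) (hclosed : ∀ s, IsClosed {x | x ∈ D ∧ f x ≤ s})
    (hcompact : IsCompact {x | x ∈ D ∧ f x ≤ c}) {U : Set X} (hU : IsOpen U)
    (hsub : {x | x ∈ D ∧ f x ≤ m} ⊆ U) :
    ∀ᶠ s in 𝓝[>] m, {x | x ∈ D ∧ f x ≤ s} ⊆ U := by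
  have : Nonempty (Ioo m c) := (nonempty_Ioo.2 hmc).to_subtype
  obtain ⟨⟨s₀, hs₀⟩, hs₀U⟩ := exists_subset_nhds_of_isCompact'
    (V := fun s : Ioo m c => {x | x ∈ D ∧ f x ≤ s})
    (Monotone.directed_ge fun s t hst x hx => ⟨hx.1, hx.2.trans hst⟩)
    (fun s => hcompact.of_isClosed_subset (hclosed s) fun x hx => ⟨hx.1, hx.2.trans s.2.2.le⟩)
    (fun s => hclosed s) fun x hx => by
      have hx' : ∀ s : Ioo m c, x ∈ D ∧ f x ≤ s := mem_iInter.1 hx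
      refine hU.mem_nhds (hsub ⟨(hx' (Classical.arbitrary _)).1, ?_⟩)
      by_contra! hfx
      obtain ⟨s, hms, hs⟩ := exists_between (lt_min hfx hmc)
      exact (hx' ⟨s, hms, hs.trans_le (min_le_right _ _)⟩).2.not_gt (hs.trans_le (min_le_left _ _))
  filter_upwards [Ioo_mem_nhdsGT hs₀.1] with s hs
  exact fun x hx => hs₀U ⟨hx.1, hx.2.trans hs.2.le⟩

theorem exists_pos_add_lt_of_dist_eq {X : Type*} [PseudoMetricSpace X] [ProperSpace X]
    {D : Set X} {f : X → ℝ} (hclosed : ∀ s, IsClosed {x | x ∈ D ∧ f x ≤ s}) {x₀ : X} {R : ℝ}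
    (hR : {x | x ∈ D ∧ f x ≤ f x₀} ⊆ closedBall x₀ R) :
    ∃ δ > 0, ∀ y ∈ D, dist y x₀ = R + 1 → f x₀ + δ < f y := by
  have hclosed' (s : ℝ) : IsClosed {x | x ∈ D ∩ sphere x₀ (R + 1) ∧ f x ≤ s} := by
    convert (hclosed s).inter (isClosed_sphere (x := x₀) (ε := R + 1)) using 1
    ext; simp only [mem_inter_iff, mem_ofPred_eq]; tauto
  have hempty : {x | x ∈ D ∩ sphere x₀ (R + 1) ∧ f x ≤ f x₀} ⊆ ∅ := fun x hx => by
    have : dist x x₀ ≤ R := hR ⟨hx.1.1, hx.2⟩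
    have : dist x x₀ = R + 1 := hx.1.2
    linarith
  obtain ⟨s, hs, hsm⟩ := ((eventually_sublevel_subset_of_isOpen (lt_add_one (f x₀)) hclosed'
    ((isCompact_sphere x₀ (R + 1)).of_isClosed_subset (hclosed' _) fun x hx => hx.1.2)
    isOpen_empty hempty).and self_mem_nhdsWithin).exists
  refine ⟨s - f x₀, sub_pos.2 hsm, fun y hy hyR => ?_⟩
  by_contra! hys
  exact hs ⟨⟨hy, hyR⟩, by linarith⟩

section NormedSpace

variable {E : Type*} [NormedAddCommGroup E] [NormedSpace ℝ E] {D : Set E} {f : E → ℝ}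

theorem ConvexOn.exists_dist_eq_le (hf : ConvexOn ℝ D f) {x₀ x : E} (hx₀ : x₀ ∈ D) (hx : x ∈ D)
    {r : ℝ} (hr : 0 < r) (hrx : r ≤ dist x x₀) :
    ∃ y ∈ D, dist y x₀ = r ∧ f y ≤ f x₀ + r / dist x x₀ * (f x - f x₀) := by
  have hd : 0 < dist x x₀ := hr.trans_le hrx
  set t := r / dist x x₀
  have ht₀ : 0 ≤ t := by positivity
  have ht₁ : t ≤ 1 := div_le_one_of_le₀ hrx hd.le
  refine ⟨AffineMap.lineMap x₀ x t, ?_, ?_, ?_⟩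
  · rw [AffineMap.lineMap_apply_module]
    exact hf.1 hx₀ hx (sub_nonneg.2 ht₁) ht₀ (sub_add_cancel 1 t)
  · rw [dist_lineMap_left, Real.norm_of_nonneg ht₀, dist_comm, div_mul_cancel₀ r hd.ne']
  · have := hf.2 hx₀ hx (sub_nonneg.2 ht₁) ht₀ (sub_add_cancel 1 t)
    rw [AffineMap.lineMap_apply_module]
    simp only [smul_eq_mul] at this
    linarith

theorem ConvexOn.isBounded_sublevel [ProperSpace E] (hf : ConvexOn ℝ D f)
    (hclosed : ∀ s, IsClosed {x | x ∈ D ∧ f x ≤ s}) {x₀ : E} (hx₀ : x₀ ∈ D)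
    (hbdd : IsBounded {x | x ∈ D ∧ f x ≤ f x₀}) (c : ℝ) :
    IsBounded {x | x ∈ D ∧ f x ≤ c} := by
  obtain ⟨R, hR⟩ := (isBounded_iff_subset_closedBall x₀).1 hbdd
  have hR₀ : 0 ≤ R := by simpa using hR ⟨hx₀, le_rfl⟩
  obtain ⟨δ, hδ, hsphere⟩ := exists_pos_add_lt_of_dist_eq hclosed hR
  refine (isBounded_closedBall (x := x₀) (r := max (R + 1) ((R + 1) * (c - f x₀) / δ))).subset
    fun x hx => ?_
  rw [mem_closedBall]
  by_contra! hfar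
  have hd : R + 1 < dist x x₀ := (le_max_left _ _).trans_lt hfar
  obtain ⟨y, hyD, hyR, hfy⟩ := hf.exists_dist_eq_le hx₀ hx.1 (by positivity) hd.le
  have hδd : δ < (R + 1) * (c - f x₀) / dist x x₀ := by
    calc δ < (R + 1) / dist x x₀ * (f x - f x₀) := by linarith [hsphere y hyD hyR]
      _ ≤ (R + 1) / dist x x₀ * (c - f x₀) := by gcongr; exact hx.2
      _ = (R + 1) * (c - f x₀) / dist x x₀ := by ring
  rw [lt_div_iff₀ (by linarith)] at hδd
  have := (le_max_right _ _).trans_lt hfar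
  rw [div_lt_iff₀ hδ] at this
  linarith

end NormedSpace

theorem stmt_9_general (n : ℕ) (D : Set (EuclideanSpace ℝ (Fin n)))
    (Θ : EuclideanSpace ℝ (Fin n) → ℝ)
    (hconv : ConvexOn ℝ D Θ)
    (hclosed : IsClosed {p : EuclideanSpace ℝ (Fin n) × ℝ | p.1 ∈ D ∧ Θ p.1 ≤ p.2})
    (Θopt : ℝ) (Xstar : Set (EuclideanSpace ℝ (Fin n)))
    (hXstar : Xstar = {x | x ∈ D ∧ Θ x = Θopt ∧ ∀ y ∈ D, Θ x ≤ Θ y})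
    (hXne : Xstar.Nonempty) (hXbdd : Bornology.IsBounded Xstar)
    (P : EuclideanSpace ℝ (Fin n) → EuclideanSpace ℝ (Fin n))
    (hP : ∀ x, P x ∈ Xstar ∧ ∀ y ∈ Xstar, dist x (P x) ≤ dist x y) :
    Filter.Tendsto
      (fun s : ℝ => ⨆ x ∈ closure {x | x ∈ D ∧ Θ x < s}, edist x (P x))
      (nhdsWithin Θopt (Set.Ioi Θopt)) (nhds 0) := by
  obtain ⟨x₀, hx₀D, rfl, hx₀min⟩ := hXstar ▸ hXne
  have hXsub : Xstar = {x | x ∈ D ∧ Θ x ≤ Θ x₀} := by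
    rw [hXstar]; ext x
    exact ⟨fun hx => ⟨hx.1, hx.2.1.le⟩, fun hx =>
      ⟨hx.1, hx.2.antisymm (hx₀min x hx.1), fun y hy => hx.2.trans (hx₀min y hy)⟩⟩
  have hsublevel := isClosed_sublevel_of_isClosed_epigraph hclosed
  have hcompact := isCompact_of_isClosed_isBounded (hsublevel _)
    (hconv.isBounded_sublevel hsublevel hx₀D (hXsub ▸ hXbdd) (Θ x₀ + 1))
  rw [ENNReal.tendsto_nhds_zero]
  intro ε hε
  filter_upwards [eventually_sublevel_subset_of_isOpen (lt_add_one _) hsublevel hcompact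
    (isOpen_lt continuous_infEDist continuous_const)
    fun x hx => show infEDist x Xstar < ε by rwa [infEDist_zero_of_mem (hXsub ▸ hx)]] with s hs
  refine iSup₂_le fun x hx => ?_
  have hxs : x ∈ {y | y ∈ D ∧ Θ y ≤ s} :=
    closure_minimal (fun _ hy => And.imp_right le_of_lt hy) (hsublevel s) hx
  calc edist x (P x) ≤ infEDist x Xstar := le_infEDist.2 fun y hy => by
        simpa only [edist_dist] using ENNReal.ofReal_le_ofReal ((hP x).2 y hy)
    _ ≤ ε := (hs hxs).le

/-- Theorem 6, equation (52): the maximal distance from points of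
`cl {x ∈ D | Θ x < s}` to the (nonempty, closed, convex, bounded) optimal set
`X*` tends to `0` as `s → Θopt⁺`. Here `P` is the Euclidean projection onto
`X*`, characterized by realizing the distance. -/
theorem stmt_9 (n : ℕ) (D : Set (EuclideanSpace ℝ (Fin n)))
    (Θ : EuclideanSpace ℝ (Fin n) → ℝ)
    (hproper : D.Nonempty)
    (hconv : ConvexOn ℝ D Θ)
    (hclosed : IsClosed {p : EuclideanSpace ℝ (Fin n) × ℝ | p.1 ∈ D ∧ Θ p.1 ≤ p.2})
    (Θopt : ℝ) (Xstar : Set (EuclideanSpace ℝ (Fin n)))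
    (hXstar : Xstar = {x | x ∈ D ∧ Θ x = Θopt ∧ ∀ y ∈ D, Θ x ≤ Θ y})
    (hXne : Xstar.Nonempty) (hXclosed : IsClosed Xstar)
    (hXconv : Convex ℝ Xstar) (hXbdd : Bornology.IsBounded Xstar)
    (P : EuclideanSpace ℝ (Fin n) → EuclideanSpace ℝ (Fin n))
    (hP : ∀ x, P x ∈ Xstar ∧ ∀ y ∈ Xstar, dist x (P x) ≤ dist x y) :
    Filter.Tendsto
      (fun s : ℝ => ⨆ x ∈ closure {x | x ∈ D ∧ Θ x < s}, edist x (P x))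
      (nhdsWithin Θopt (Set.Ioi Θopt)) (nhds 0) :=
  stmt_9_general n D Θ hconv hclosed Θopt Xstar hXstar hXne hXbdd P hP
end
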